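/- Suppose L is a metric flag labeled triangulation of the 2-sphere. Then every Euclidean 4-circuit C of L is a full subcomplex of L: neither pair of opposite vertices of C is joined by an edge of L, and no three vertices of C span a 2-simplex of L. -/

import Mathlib

/-!
The metric flag condition forces every triangle with two right angles to be filled, since
`1/2 + 1/2 + 1/m > 1` for every label `m`. Hence a diagonal `{v i, v (i + 2)}` of a 4-circuit
with all labels `2` would fill both triangles on either side of it, making the circuit the
boundary of two 2-simplices sharing an edge. So a Euclidean 4-circuit has no diagonals, and a
4-cycle without diagonals is full: any three of its vertices, and any face spanned by them other
than a vertex or a circuit edge, contain a pair of opposite vertices.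
-/

open Geometry

/-- The ambient space for our simplicial complexes. -/
abbrev E3 : Type := EuclideanSpace ℝ (Fin 3)

noncomputable instance : DecidableEq E3 := Classical.decEq _

namespace CoxOrb

variable (L : SimplicialComplex ℝ E3) (m : E3 → E3 → ℕ)

/-- `L` is a labeled triangulation of the 2-sphere with edge labeling `m`:
`L` is finite, its underlying space is homeomorphic to the 2-sphere, and `m`
is symmetric with `m s t ≥ 2` on every edge `{s, t}` of `L`. -/
structure IsLabeledS2 : Prop where
  finite : L.faces.Finite
  sphere : Nonempty (L.space ≃ₜ (Metric.sphere (0 : E3) 1 : Set E3))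
  symm : ∀ s t : E3, m s t = m t s
  two_le : ∀ s t : E3, s ≠ t → ({s, t} : Finset E3) ∈ L.faces → 2 ≤ m s t

/-- `L` with labeling `m` is metric flag: three pairwise-joined vertices span a
2-simplex iff the corresponding angle sum `π/m_st + π/m_tu + π/m_us` exceeds `π`. -/
def MetricFlag : Prop :=
  ∀ s t u : E3, s ≠ t → t ≠ u → s ≠ u →
    ({s, t} : Finset E3) ∈ L.faces → ({t, u} : Finset E3) ∈ L.faces →
    ({s, u} : Finset E3) ∈ L.faces →
    (({s, t, u} : Finset E3) ∈ L.faces ↔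
      1 / (m s t : ℝ) + 1 / (m t u : ℝ) + 1 / (m u s : ℝ) > 1)

/-- The link of a vertex `s`, as a set of faces of `L`. -/
def link (s : E3) : Set (Finset E3) :=
  {F | F ∈ L.faces ∧ s ∉ F ∧ insert s F ∈ L.faces}

/-- The closed star of a vertex `s`: all faces of `L` contained in some face
containing `s`. -/
def star (s : E3) : Set (Finset E3) :=
  {F | F ∈ L.faces ∧ ∃ G ∈ L.faces, s ∈ G ∧ F ⊆ G}

/-- The vertices of the link of `s`. -/
def linkVerts (s : E3) : Set E3 :=
  {v | v ≠ s ∧ ({s, v} : Finset E3) ∈ L.faces}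

/-- A set of faces `A` is a full subcomplex of `L`: every face of `L` all of
whose vertices are vertices of `A` belongs to `A`. -/
def IsFullSubcomplex (A : Set (Finset E3)) : Prop :=
  A ⊆ L.faces ∧ ∀ F ∈ L.faces, (∀ v ∈ F, ({v} : Finset E3) ∈ A) → F ∈ A

/-- `s` is a 3-Euclidean vertex of `L`: it has valence three and the labels on
the three edges of its link have reciprocals summing to one. -/
def IsThreeEuclidean (s : E3) : Prop :=
  ({s} : Finset E3) ∈ L.faces ∧
  ∃ s₀ s₁ s₂ : E3, s₀ ≠ s₁ ∧ s₁ ≠ s₂ ∧ s₀ ≠ s₂ ∧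
    linkVerts L s = {s₀, s₁, s₂} ∧
    1 / (m s₀ s₁ : ℝ) + 1 / (m s₁ s₂ : ℝ) + 1 / (m s₂ s₀ : ℝ) = 1

/-- `s` is a 4-Euclidean vertex of `L`: it has valence four, its link is the
4-circuit on `v 0, v 1, v 2, v 3` (in cyclic order), and the labels on the
edges of the link are all `2`. -/
def IsFourEuclidean (s : E3) : Prop :=
  ({s} : Finset E3) ∈ L.faces ∧
  ∃ v : Fin 4 → E3, Function.Injective v ∧
    linkVerts L s = {v 0, v 1, v 2, v 3} ∧
    (∀ i : Fin 4, ({s, v i, v (i + 1)} : Finset E3) ∈ L.faces) ∧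
    (∀ i : Fin 4, m (v i) (v (i + 1)) = 2)

/-- `L` is the boundary complex of a 3-simplex: four pairwise-joined vertices
spanning four 2-simplices. -/
def IsBoundaryOfThreeSimplex : Prop :=
  ∃ a b c d : E3, a ≠ b ∧ a ≠ c ∧ a ≠ d ∧ b ≠ c ∧ b ≠ d ∧ c ≠ d ∧
    (∀ v : E3, ({v} : Finset E3) ∈ L.faces ↔ v = a ∨ v = b ∨ v = c ∨ v = d) ∧
    ({a, b, c} : Finset E3) ∈ L.faces ∧ ({a, b, d} : Finset E3) ∈ L.faces ∧
    ({a, c, d} : Finset E3) ∈ L.faces ∧ ({b, c, d} : Finset E3) ∈ L.faces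

/-- `L` is the suspension of a 3-gon. -/
def IsSuspensionOfThreeGon : Prop :=
  ∃ t t' s₀ s₁ s₂ : E3, [t, t', s₀, s₁, s₂].Pairwise (· ≠ ·) ∧
    (∀ v : E3, ({v} : Finset E3) ∈ L.faces ↔ v = t ∨ v = t' ∨ v = s₀ ∨ v = s₁ ∨ v = s₂) ∧
    ({s₀, s₁} : Finset E3) ∈ L.faces ∧ ({s₁, s₂} : Finset E3) ∈ L.faces ∧
    ({s₀, s₂} : Finset E3) ∈ L.faces ∧
    ({t, s₀} : Finset E3) ∈ L.faces ∧ ({t, s₁} : Finset E3) ∈ L.faces ∧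
    ({t, s₂} : Finset E3) ∈ L.faces ∧
    ({t', s₀} : Finset E3) ∈ L.faces ∧ ({t', s₁} : Finset E3) ∈ L.faces ∧
    ({t', s₂} : Finset E3) ∈ L.faces ∧
    ({t, t'} : Finset E3) ∉ L.faces

/-- The simplicial join of the subcomplex `Z` with the two points `t, t'`. -/
def joinSusp (Z : Set (Finset E3)) (t t' : E3) : Set (Finset E3) :=
  Z ∪ {{t}, {t'}} ∪ ((fun F => insert t F) '' Z) ∪ ((fun F => insert t' F) '' Z)

/-- `T` is the right-angled suspension in `L` of the subcomplex `Z` with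
suspension points `t, t'` (not joined by an edge of `T`): every edge from a
suspension point to a vertex of `Z` is labeled `2`. -/
structure IsRASuspData (T Z : Set (Finset E3)) (t t' : E3) : Prop where
  subset : T ⊆ L.faces
  zsubset : Z ⊆ L.faces
  zdown : ∀ F ∈ Z, ∀ G : Finset E3, G ⊆ F → G.Nonempty → G ∈ Z
  znonempty : Z.Nonempty
  tne : t ≠ t'
  t_notin : ∀ F ∈ Z, t ∉ F
  t'_notin : ∀ F ∈ Z, t' ∉ F
  labels : ∀ v : E3, ({v} : Finset E3) ∈ Z → m t v = 2 ∧ m t' v = 2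
  eq : T = joinSusp Z t t'

/-- `T` is a right-angled suspension in `L`. -/
def IsRASusp (T : Set (Finset E3)) : Prop :=
  ∃ Z t t', IsRASuspData L m T Z t t'

/-- The base `Z` of the suspension is neither a single vertex nor a single
edge, so that the suspension is infinite. -/
def InfiniteBase (Z : Set (Finset E3)) : Prop :=
  (¬ ∃ v : E3, Z = {({v} : Finset E3)}) ∧
  (¬ ∃ u v : E3, u ≠ v ∧ Z = {({u} : Finset E3), ({v} : Finset E3), ({u, v} : Finset E3)})

/-- `T` is an infinite, maximal right-angled suspension in `L`: it is an
RA-suspension of a full subcomplex which is neither a vertex nor an edge, and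
`T` is not properly contained in another RA-suspension. -/
def IsInfMaxRASusp (T : Set (Finset E3)) : Prop :=
  (∃ Z t t', IsRASuspData L m T Z t t' ∧ InfiniteBase Z ∧ IsFullSubcomplex L Z) ∧
  ∀ T', IsRASusp L m T' → T ⊆ T' → T = T'

/-- `v 0, v 1, v 2, v 3` (in cyclic order) form a Euclidean 4-circuit of `L`:
all four edge labels are `2` and the circuit is not the boundary of the union
of two 2-simplices of `L` sharing an edge. -/
def IsEuclidean4Circuit (v : Fin 4 → E3) : Prop :=
  Function.Injective v ∧
  (∀ i : Fin 4, ({v i, v (i + 1)} : Finset E3) ∈ L.faces) ∧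
  (∀ i : Fin 4, m (v i) (v (i + 1)) = 2) ∧
  ¬ ((({v 0, v 1, v 2} : Finset E3) ∈ L.faces ∧ ({v 0, v 2, v 3} : Finset E3) ∈ L.faces) ∨
     (({v 1, v 2, v 3} : Finset E3) ∈ L.faces ∧ ({v 0, v 1, v 3} : Finset E3) ∈ L.faces))

/-- The subcomplex consisting of the vertices and edges of the 4-circuit `v`. -/
def circuitComplex (v : Fin 4 → E3) : Set (Finset E3) :=
  {F | (∃ i : Fin 4, F = {v i}) ∨ (∃ i : Fin 4, F = {v i, v (i + 1)})}

/-- `T` is the right-angled cone on a Euclidean 4-circuit: the closed star of a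
vertex `c` of valence four whose link is a Euclidean 4-circuit, all four edges
containing `c` being labeled `2`. -/
def IsRAConeOn4Circuit (T : Set (Finset E3)) : Prop :=
  ∃ (c : E3) (v : Fin 4 → E3), IsEuclidean4Circuit L m v ∧
    linkVerts L c = {v 0, v 1, v 2, v 3} ∧
    (∀ i : Fin 4, ({c, v i, v (i + 1)} : Finset E3) ∈ L.faces) ∧
    (∀ i : Fin 4, m c (v i) = 2) ∧
    T = star L c

/-- The generating relation for Seifert subcomplexes: two infinite, maximal
RA-suspensions whose intersection is a Euclidean 4-circuit. -/
def SeifertRel (S S' : Set (Finset E3)) : Prop :=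
  IsInfMaxRASusp L m S ∧ IsInfMaxRASusp L m S' ∧
  ∃ v : Fin 4 → E3, IsEuclidean4Circuit L m v ∧ S ∩ S' = circuitComplex v

/-- `D` is a Seifert subcomplex of `L`: the union of the members of an
equivalence class of infinite, maximal RA-suspensions under the equivalence
relation generated by `SeifertRel`. -/
def IsSeifertSubcomplex (D : Set (Finset E3)) : Prop :=
  ∃ S₀, IsInfMaxRASusp L m S₀ ∧
    D = ⋃₀ {S | IsInfMaxRASusp L m S ∧ Relation.EqvGen (SeifertRel L m) S₀ S}

end CoxOrb

open CoxOrb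

namespace CoxOrb

theorem Fin4.exists_add_two_mem_of_ne (i j k : Fin 4) (hij : i ≠ j) (hjk : j ≠ k) (hik : i ≠ k) :
    ∃ d : Fin 4, d ∈ ({i, j, k} : Finset (Fin 4)) ∧ d + 2 ∈ ({i, j, k} : Finset (Fin 4)) := by
  revert i j k
  decide

theorem Fin4.eq_singleton_or_eq_pair_add_one (S : Finset (Fin 4)) (hS : S.Nonempty)
    (hdiag : ∀ d ∈ S, d + 2 ∉ S) : (∃ i, S = {i}) ∨ ∃ i, S = {i, i + 1} := by
  revert S
  decide

section

variable {L : SimplicialComplex ℝ E3} {m : E3 → E3 → ℕ}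

theorem MetricFlag.mem_faces_of_labels_eq_two (hflag : MetricFlag L m) {s t u : E3}
    (hst : s ≠ t) (htu : t ≠ u) (hsu : s ≠ u) (est : ({s, t} : Finset E3) ∈ L.faces)
    (etu : ({t, u} : Finset E3) ∈ L.faces) (esu : ({s, u} : Finset E3) ∈ L.faces)
    (hmst : m s t = 2) (hmtu : m t u = 2) (hmus : m u s ≠ 0) :
    ({s, t, u} : Finset E3) ∈ L.faces := by
  rw [hflag s t u hst htu hsu est etu esu, hmst, hmtu]
  norm_num
  exact Nat.pos_of_ne_zero hmus

theorem pair_mem_faces_of_subset {F : Finset E3} (hF : F ∈ L.faces) {a b : E3} (ha : a ∈ F)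
    (hb : b ∈ F) : ({a, b} : Finset E3) ∈ L.faces :=
  L.down_closed hF (Finset.insert_subset ha (Finset.singleton_subset_iff.mpr hb))
    (Finset.insert_nonempty _ _)

theorem exists_eq_of_singleton_mem_circuitComplex {v : Fin 4 → E3} {x : E3}
    (hx : ({x} : Finset E3) ∈ circuitComplex v) : ∃ i, v i = x := by
  rcases hx with ⟨i, hi⟩ | ⟨i, hi⟩
  · exact ⟨i, (Finset.singleton_inj.mp hi).symm⟩
  · exact ⟨i, Finset.mem_singleton.mp (hi ▸ Finset.mem_insert_self _ _)⟩

theorem circuitComplex_subset_faces {v : Fin 4 → E3}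
    (hedge : ∀ i : Fin 4, ({v i, v (i + 1)} : Finset E3) ∈ L.faces) :
    circuitComplex v ⊆ L.faces := by
  rintro F (⟨i, rfl⟩ | ⟨i, rfl⟩)
  · exact L.down_closed (hedge i) (by simp) (Finset.singleton_nonempty _)
  · exact hedge i

theorem isFullSubcomplex_circuitComplex {v : Fin 4 → E3}
    (hedge : ∀ i : Fin 4, ({v i, v (i + 1)} : Finset E3) ∈ L.faces)
    (hdiag : ∀ i : Fin 4, ({v i, v (i + 2)} : Finset E3) ∉ L.faces) :
    IsFullSubcomplex L (circuitComplex v) := by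
  refine ⟨circuitComplex_subset_faces hedge, fun F hF hA => ?_⟩
  set S := Finset.univ.filter (fun i => v i ∈ F) with hS
  have hFS : F = S.image v := by
    ext x
    simp only [hS, Finset.mem_image, Finset.mem_filter, Finset.mem_univ, true_and]
    refine ⟨fun hx => ?_, fun ⟨i, hi, hix⟩ => hix ▸ hi⟩
    obtain ⟨i, rfl⟩ := exists_eq_of_singleton_mem_circuitComplex (hA x hx)
    exact ⟨i, hx, rfl⟩
  have hSne : S.Nonempty := by
    rw [← Finset.image_nonempty (f := v), ← hFS]
    exact L.nonempty_of_mem_faces hF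
  have hSdiag : ∀ d ∈ S, d + 2 ∉ S := fun d hd hd2 =>
    hdiag d (pair_mem_faces_of_subset hF (Finset.mem_filter.mp hd).2 (Finset.mem_filter.mp hd2).2)
  rcases Fin4.eq_singleton_or_eq_pair_add_one S hSne hSdiag with ⟨i, hi⟩ | ⟨i, hi⟩
  · exact Or.inl ⟨i, by rw [hFS, hi, Finset.image_singleton]⟩
  · exact Or.inr ⟨i, by rw [hFS, hi, Finset.image_insert, Finset.image_singleton]⟩

theorem triple_notMem_faces_of_diag_notMem {v : Fin 4 → E3}
    (hdiag : ∀ i : Fin 4, ({v i, v (i + 2)} : Finset E3) ∉ L.faces)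
    (i j k : Fin 4) (hij : i ≠ j) (hjk : j ≠ k) (hik : i ≠ k) :
    ({v i, v j, v k} : Finset E3) ∉ L.faces := fun hF => by
  obtain ⟨d, hd, hd2⟩ := Fin4.exists_add_two_mem_of_ne i j k hij hjk hik
  have hv : ∀ l ∈ ({i, j, k} : Finset (Fin 4)), v l ∈ ({v i, v j, v k} : Finset E3) := by
    simp only [Finset.mem_insert, Finset.mem_singleton]
    rintro l (rfl | rfl | rfl) <;> simp
  exact hdiag d (pair_mem_faces_of_subset hF (hv d hd) (hv _ hd2))

namespace IsEuclidean4Circuit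

variable {v : Fin 4 → E3}

theorem mem_faces_of_diag (hv : IsEuclidean4Circuit L m v) (hflag : MetricFlag L m)
    (hm : ∀ s t : E3, s ≠ t → ({s, t} : Finset E3) ∈ L.faces → 2 ≤ m s t) (i : Fin 4)
    (hdiag : ({v i, v (i + 2)} : Finset E3) ∈ L.faces) :
    ({v i, v (i + 1), v (i + 2)} : Finset E3) ∈ L.faces := by
  obtain ⟨hinj, hedge, hlab, -⟩ := hv
  have hne : ∀ k l : Fin 4, k ≠ l → v (i + k) ≠ v (i + l) := fun k l hkl =>
    hinj.ne (by simpa using hkl)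
  have h01 : v i ≠ v (i + 1) := by simpa using hne 0 1 (by decide)
  have h12 : v (i + 1) ≠ v (i + 2) := hne 1 2 (by decide)
  have h02 : v i ≠ v (i + 2) := by simpa using hne 0 2 (by decide)
  have hadd : i + 1 + 1 = i + 2 := by rw [add_assoc]; rfl
  refine hflag.mem_faces_of_labels_eq_two h01 h12 h02 (hedge i) (hadd ▸ hedge (i + 1)) hdiag (hlab i)
    (hadd ▸ hlab (i + 1)) ?_
  have h20 := hm _ _ h02.symm (Finset.pair_comm (v i) _ ▸ hdiag)
  omega

theorem diag_notMem_faces (hv : IsEuclidean4Circuit L m v) (hflag : MetricFlag L m)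
    (hm : ∀ s t : E3, s ≠ t → ({s, t} : Finset E3) ∈ L.faces → 2 ≤ m s t) (i : Fin 4) :
    ({v i, v (i + 2)} : Finset E3) ∉ L.faces := fun hdiag => by
  have hdiag' : ({v (i + 2), v (i + 2 + 2)} : Finset E3) ∈ L.faces := by
    rwa [add_assoc, show (2 + 2 : Fin 4) = 0 from rfl, add_zero, Finset.pair_comm]
  have h₁ := hv.mem_faces_of_diag hflag hm i hdiag
  have h₂ := hv.mem_faces_of_diag hflag hm (i + 2) hdiag'
  have rot : ∀ a b c : E3, ({a, b, c} : Finset E3) = {b, c, a} := fun a b c => by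
    ext; simp only [Finset.mem_insert, Finset.mem_singleton]; tauto
  apply hv.2.2.2
  fin_cases i <;> simp only [Fin.reduceFinMk, Fin.isValue, Fin.reduceAdd] at h₁ h₂
  · exact Or.inl ⟨h₁, by rwa [rot]⟩
  · exact Or.inr ⟨h₁, by rwa [rot] at h₂⟩
  · exact Or.inl ⟨h₂, by rwa [rot]⟩
  · exact Or.inr ⟨h₂, by rwa [rot] at h₁⟩

end IsEuclidean4Circuit

end

end CoxOrb

open CoxOrb

/-- Every Euclidean 4-circuit of a metric flag labeled triangulation of the
2-sphere is a full subcomplex: neither pair of opposite vertices spans an edge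
of `L`, and no three of its vertices span a 2-simplex of `L`. -/
theorem euclidean4Circuit_full
    (L : SimplicialComplex ℝ E3) (m : E3 → E3 → ℕ)
    (hL : IsLabeledS2 L m) (hflag : MetricFlag L m)
    (v : Fin 4 → E3) (hv : IsEuclidean4Circuit L m v) :
    IsFullSubcomplex L (circuitComplex v) ∧
    ({v 0, v 2} : Finset E3) ∉ L.faces ∧ ({v 1, v 3} : Finset E3) ∉ L.faces ∧
    ∀ i j k : Fin 4, i ≠ j → j ≠ k → i ≠ k →
      ({v i, v j, v k} : Finset E3) ∉ L.faces := by
  have hdiag := hv.diag_notMem_faces hflag hL.two_le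
  exact ⟨isFullSubcomplex_circuitComplex hv.2.1 hdiag, hdiag 0, hdiag 1,
    triple_notMem_faces_of_diag_notMem hdiag⟩
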